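/- arXiv:2302.06776 — 2 statements merged into one kernel-verified Lean document; each statement's English description precedes it below -/
import Mathlib

section
/- Let C be a finite set of nonzero vectors in ℝ² that spans ℝ² linearly and is closed under negation, and let c ∈ C. Then for any two points p, q ∈ ℝ² there exist c₁, c₂ ∈ C and scalars s₁, s₂ ≥ 0 and s₃ > 0 such that q = p + s₁·c₁ + s₂·c₂ + s₃·c. In words, q can be reached from p by a C-oriented path of at most three links whose last link has direction c and positive length. -/
theorem three_link_path_with_prescribed_last_link
    (C : Finset (EuclideanSpace ℝ (Fin 2)))
    (h0 : (0 : EuclideanSpace ℝ (Fin 2)) ∉ C)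
    (hspan : Submodule.span ℝ (C : Set (EuclideanSpace ℝ (Fin 2))) = ⊤)
    (hneg : ∀ c' ∈ C, -c' ∈ C)
    (c : EuclideanSpace ℝ (Fin 2)) (hc : c ∈ C)
    (p q : EuclideanSpace ℝ (Fin 2)) :
    ∃ c₁ ∈ C, ∃ c₂ ∈ C, ∃ s₁ s₂ s₃ : ℝ, 0 ≤ s₁ ∧ 0 ≤ s₂ ∧ 0 < s₃ ∧
      q = p + s₁ • c₁ + s₂ • c₂ + s₃ • c := by
  obtain ⟨t, hts, hsp, hli⟩ :=
    exists_linearIndependent ℝ (C : Set (EuclideanSpace ℝ (Fin 2)))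
  rw [hspan] at hsp
  have ht : t.Finite := C.finite_toSet.subset hts
  haveI := ht.fintype
  let b : Module.Basis t ℝ (EuclideanSpace ℝ (Fin 2)) := Module.Basis.mk hli (by rw [Subtype.range_coe, hsp])
  have hcard : Fintype.card t = 2 := by
    have h1 := Module.finrank_eq_card_basis b
    have h2 : Module.finrank ℝ (EuclideanSpace ℝ (Fin 2)) = 2 := by
      simp [finrank_euclideanSpace_fin]
    omega
  obtain ⟨e⟩ : Nonempty (t ≃ Fin 2) := ⟨Fintype.equivFinOfCardEq hcard⟩
  let b' := b.reindex e
  have hb' : ∀ i, (b' i : EuclideanSpace ℝ (Fin 2)) ∈ C := by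
    intro i
    have : b' i = ((e.symm i : t) : EuclideanSpace ℝ (Fin 2)) := by
      simp [b', b, Module.Basis.reindex_apply, Module.Basis.mk_apply]
    rw [this]; exact hts (e.symm i).2
  set v : EuclideanSpace ℝ (Fin 2) := q - p - c with hv
  have hrepr : v = b'.repr v 0 • b' 0 + b'.repr v 1 • b' 1 := by
    have h := b'.sum_repr v
    rw [Fin.sum_univ_two] at h
    exact h.symm
  have key : ∀ (a : ℝ) (w : EuclideanSpace ℝ (Fin 2)), w ∈ C →
      ∃ s : ℝ, 0 ≤ s ∧ ∃ w' ∈ C, s • w' = a • w := by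
    intro a w hw
    rcases le_or_gt 0 a with h | h
    · exact ⟨a, h, w, hw, rfl⟩
    · exact ⟨-a, by linarith, -w, hneg w hw, by simp⟩
  obtain ⟨s₁, hs₁, c₁, hc₁, heq₁⟩ := key (b'.repr v 0) (b' 0) (hb' 0)
  obtain ⟨s₂, hs₂, c₂, hc₂, heq₂⟩ := key (b'.repr v 1) (b' 1) (hb' 1)
  refine ⟨c₁, hc₁, c₂, hc₂, s₁, s₂, 1, hs₁, hs₂, one_pos, ?_⟩
  rw [heq₁, heq₂, one_smul, add_assoc p, ← hrepr, hv]
  abel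
end

section
/- Let L be a line in ℝ² and let a₀, b₀ ∈ L. Let v ∈ ℝ², s, t ≥ 0, and set p = a₀ + s·v and q = b₀ − t·v. Then the closed segment from p to q intersects L. -/
theorem segment_between_opposite_semislabs_meets_line
    (L : Set (EuclideanSpace ℝ (Fin 2)))
    (hL : ∃ p₀ d : EuclideanSpace ℝ (Fin 2), d ≠ 0 ∧
      L = {x | ∃ r : ℝ, x = p₀ + r • d})
    (a₀ b₀ : EuclideanSpace ℝ (Fin 2)) (ha : a₀ ∈ L) (hb : b₀ ∈ L)
    (v : EuclideanSpace ℝ (Fin 2)) (s t : ℝ) (hs : 0 ≤ s) (ht : 0 ≤ t)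
    (p q : EuclideanSpace ℝ (Fin 2)) (hp : p = a₀ + s • v) (hq : q = b₀ - t • v) :
    (segment ℝ p q ∩ L).Nonempty := by
  obtain ⟨p₀, d, hd, hLS⟩ := hL
  rw [hLS] at ha hb ⊢
  obtain ⟨ra, hra⟩ := ha
  obtain ⟨rb, hrb⟩ := hb
  rcases eq_or_lt_of_le (add_nonneg hs ht) with hst | hst
  · have hs0 : s = 0 := by linarith
    have ht0 : t = 0 := by linarith
    refine ⟨p, left_mem_segment ℝ p q, ⟨ra, ?_⟩⟩
    rw [hp, hs0, hra]; simp
  · set c : ℝ := t / (s + t) with hc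
    have hc0 : 0 ≤ c := div_nonneg ht (le_of_lt hst)
    have hc1 : c ≤ 1 := by
      rw [hc, div_le_one hst]; linarith
    refine ⟨c • p + (1 - c) • q, ⟨c, 1 - c, hc0, by linarith, by ring, rfl⟩, ?_⟩
    refine ⟨c * ra + (1 - c) * rb, ?_⟩
    have key : c * s - (1 - c) * t = 0 := by
      field_simp [hc]
      have h1 : c * (s + t) = t := by rw [hc]; exact div_mul_cancel₀ t (ne_of_gt hst)
      linear_combination h1
    rw [hp, hq, hra, hrb]
    have : c • (p₀ + ra • d + s • v) + (1 - c) • (p₀ + rb • d - t • v)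
        = p₀ + (c * ra + (1 - c) * rb) • d + (c * s - (1 - c) * t) • v := by
      module
    rw [this, key]
    simp
end
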